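/- arXiv:2109.00241 — 4 statements merged into one kernel-verified Lean document; each statement's English description precedes it below -/
import Mathlib

section
/- For all words x and y over {0,1} that each begin with 1 and end with 0, one has δ_{1::x} ≺ δ_y = δ_{1::y} ≺ δ_x in A, where 1::x denotes the word x with the letter 1 prepended. (These are the relations showing that A_{1,0} is not a free zinbiel algebra.) -/
/-- Words over the alphabet `{0,1}`, encoded with `false` = `0` and `true` = `1`. -/
abbrev Word : Type := List Bool

/-- The ℚ-vector space `A` of finitely supported functions on words over `{0,1}`. -/
abbrev A01 : Type := Word →₀ ℚ

/-- The basis element `δ_x` of `A` attached to a word `x`. -/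
noncomputable def δ (x : Word) : A01 := Finsupp.single x 1

/-- Prepend the letter `a` to every word of a formal sum. -/
noncomputable def prependLetter (a : Bool) (f : A01) : A01 :=
  Finsupp.mapDomain (List.cons a) f

/-- The shuffle product of two words, as an element of `A`. -/
noncomputable def shuffle : Word → Word → A01
  | [], y => δ y
  | a :: x, [] => δ (a :: x)
  | a :: x, b :: y =>
      prependLetter a (shuffle x (b :: y)) + prependLetter b (shuffle (a :: x) y)
  termination_by x y => x.length + y.length

/-- The half-shuffle product on basis words: `δ_{a::x} ≺ δ_y = a·(x ш y)`, `δ_[] ≺ δ_y = 0`. -/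
noncomputable def halfWord : Word → Word → A01
  | [], _ => 0
  | a :: x, y => prependLetter a (shuffle x y)

/-- The half-shuffle (zinbiel) product `≺` on `A`, extended bilinearly from basis words. -/
noncomputable def half (f g : A01) : A01 :=
  f.sum fun x c => g.sum fun y d => (c * d) • halfWord x y

/-- The right-parenthesized product `K(a_1, …, a_n) = a_1 ≺ (a_2 ≺ (⋯ ≺ a_n))`,
with `K(a_n) = a_n`, and `δ_[]` (the shuffle unit) for the empty list. -/
noncomputable def Klist : List A01 → A01
  | [] => δ []
  | [a] => a
  | a :: b :: l => half a (Klist (b :: l))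

/-- The generators `z_2 = δ_{(1,0)}` and `z_3 = u·δ_{(1,0,0)} + v·δ_{(1,1,0)}`;
letters of the alphabet `{2,3}` are encoded with `false` = `2` and `true` = `3`. -/
noncomputable def zgen (u v : ℚ) : Bool → A01
  | false => δ [true, false]
  | true => u • δ [true, false, false] + v • δ [true, true, false]

/-- `K_{u,v}(w)` for a word `w` over `{2,3}` (encoded with `false` = `2`, `true` = `3`). -/
noncomputable def Kuv (u v : ℚ) (w : List Bool) : A01 :=
  Klist (w.map (zgen u v))

/-- The block substitution `2 ↦ (1,0)`, `3 ↦ (1,0,0)`. -/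
def blocks0 (c : Bool) : Word := if c then [true, false, false] else [true, false]

/-- The block substitution `2 ↦ (1,0)`, `3 ↦ (1,1,0)`. -/
def blocks1 (c : Bool) : Word := if c then [true, true, false] else [true, false]

/-- `cat₀(w)`: substitute `2 ↦ (1,0)`, `3 ↦ (1,0,0)` and concatenate. -/
def cat0 (w : List Bool) : Word := (w.map blocks0).flatten

/-- `cat₁(w)`: substitute `2 ↦ (1,0)`, `3 ↦ (1,1,0)` and concatenate. -/
def cat1 (w : List Bool) : Word := (w.map blocks1).flatten

/-- A good-shuffle realizing the word `x` from the words `ws = (w^1, …, w^n)`: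
a partition `S` of the positions of `x`, reading `x` along `S j` gives `w^j`,
and the minima of the parts are in increasing order. -/
def GoodShuffle (ws : List Word) (x : Word)
    (S : Fin ws.length → Finset (Fin x.length)) : Prop :=
  (∀ p : Fin x.length, ∃! j, p ∈ S j) ∧
  (∀ j, ((S j).sort (· ≤ ·)).map x.get = ws.get j) ∧
  (∀ j k, j < k → (S j).min < (S k).min)

/-- The weight of a word over `{2,3}`: the sum of its letters. -/
def wt (w : List Bool) : ℕ := (w.map fun c => if c then 3 else 2).sum

theorem shuffle_comm : ∀ x y : Word, shuffle x y = shuffle y x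
  | [], [] => rfl
  | [], _ :: _ => by rw [shuffle, shuffle]
  | _ :: _, [] => by rw [shuffle, shuffle]
  | a :: x, b :: y => by
      rw [shuffle, shuffle, shuffle_comm x (b :: y), shuffle_comm (a :: x) y, add_comm]
  termination_by x y => x.length + y.length

theorem half_δ_δ (x y : Word) : half (δ x) (δ y) = halfWord x y := by
  simp [half, δ]

theorem relations_in_A10_general (x y : Word) :
    half (δ (true :: x)) (δ y) = half (δ (true :: y)) (δ x) := by
  rw [half_δ_δ, half_δ_δ, halfWord, halfWord, shuffle_comm]

/-- For words `x, y` over `{0,1}` beginning with `1` and ending with `0`, one has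
`δ_{1::x} ≺ δ_y = δ_{1::y} ≺ δ_x`: the relations showing `A_{1,0}` is not free. -/
theorem relations_in_A10 (x y : Word)
    (hx : x.head? = some true ∧ x.getLast? = some false)
    (hy : y.head? = some true ∧ y.getLast? = some false) :
    half (δ (true :: x)) (δ y) = half (δ (true :: y)) (δ x) :=
  relations_in_A10_general x y
end

section
/- For nonempty words w^1, …, w^n over {0,1} and any word x over {0,1}, the coefficient of δ_x in K(δ_{w^1}, …, δ_{w^n}) equals the number of good-shuffles realizing x from (w^1, …, w^n); in particular this coefficient is zero unless |x| = Σ_j |w^j|. -/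
/-! Record a good shuffle by its coloring, the list giving for each position of `x` the index of
the word it belongs to: reading `x` along color `j` must give `w^j`, and the colors must occur for
the first time in increasing order. Likewise the coefficient of `x` in `u ш v` counts the
two-colorings of `x` reading `u` and `v`. The first position of `x` necessarily has color `0`, so a
coloring of `c :: x` by `(w^1, …, w^n)` splits into a two-coloring of `x` separating the tail of
`w^1` from some subword `y`, together with a coloring of `y` by `(w^2, …, w^n)`. Summing over `y`
is exactly the recursion `K(w^1, …, w^n) = δ_{w^1} ≺ K(w^2, …, w^n)`. -/

open Finset

lemma List.cons_eq_iff_head?_eq_some {α : Type*} {a : α} {l l' : List α} :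
    a :: l = l' ↔ l'.head? = some a ∧ l = l'.tail := by
  cases l' <;> simp [eq_comm]

lemma List.idxOf_le_of_getElem_eq {α : Type*} [DecidableEq α] {l : List α} {a : α} {i : ℕ}
    (hi : i < l.length) (h : l[i] = a) : l.idxOf a ≤ i := by
  by_contra! hlt
  simpa [h] using List.not_of_lt_findIdx hlt

lemma List.idxOf_lt_idxOf_iff {α : Type*} [DecidableEq α] {l : List α} {a b : α} :
    l.idxOf a < l.idxOf b ↔
      ∃ (i : ℕ) (hi : i < l.length), l[i] = a ∧
        ∀ (k : ℕ) (hk : k < l.length), l[k] = b → i < k := by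
  constructor
  · intro h
    have hi : l.idxOf a < l.length := h.trans_le List.idxOf_le_length
    exact ⟨_, hi, List.getElem_idxOf hi,
      fun k hk hkb => h.trans_le (idxOf_le_of_getElem_eq hk hkb)⟩
  · rintro ⟨i, hi, hia, hb⟩
    refine (idxOf_le_of_getElem_eq hi hia).trans_lt ?_
    by_cases hbl : b ∈ l
    · exact hb _ (List.idxOf_lt_length_of_mem hbl) (List.getElem_idxOf _)
    · rwa [List.idxOf_eq_length hbl]

lemma Finset.coe_lt_min_iff {α : Type*} [LinearOrder α] {a : α} {t : Finset α} :
    (a : WithTop α) < t.min ↔ ∀ b ∈ t, a < b := by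
  rcases t.eq_empty_or_nonempty with rfl | ht
  · simp
  · rw [← Finset.coe_min' ht, WithTop.coe_lt_coe, Finset.lt_min'_iff]

lemma Finset.min_lt_min_iff {α : Type*} [LinearOrder α] {s t : Finset α} :
    s.min < t.min ↔ ∃ a ∈ s, ∀ b ∈ t, a < b := by
  rcases s.eq_empty_or_nonempty with rfl | hs
  · simp
  rw [← Finset.coe_min' hs, Finset.coe_lt_min_iff]
  exact ⟨fun h => ⟨_, s.min'_mem hs, h⟩,
    fun ⟨a, ha, h⟩ b hb => (s.min'_le a ha).trans_lt (h b hb)⟩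

lemma Finset.sort_filter_univ {m : ℕ} (p : Fin m → Prop) [DecidablePred p] :
    (univ.filter p).sort (· ≤ ·) = (List.finRange m).filter p :=
  (univ.filter p).sortedLT_sort.eq_of_mem_iff
    ((List.sortedLT_finRange m).pairwise.filter _).sortedLT (by simp)

lemma finite_subtype_of_length_eq {α : Type*} [Finite α] {P : List α → Prop} (m : ℕ)
    (h : ∀ l, P l → l.length = m) : Finite {l // P l} :=
  ((List.finite_length_eq α m).subset h).to_subtype

def consSigmaEquiv {α : Type*} {P : List α → Prop} (h : ¬ P []) :
    {l // P l} ≃ Σ a, {l // P (a :: l)} where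
  toFun
    | ⟨[], hl⟩ => absurd hl h
    | ⟨a :: l, hl⟩ => ⟨a, l, hl⟩
  invFun | ⟨a, l, hl⟩ => ⟨a :: l, hl⟩
  left_inv
    | ⟨[], hl⟩ => absurd hl h
    | ⟨_ :: _, _⟩ => rfl
  right_inv _ := rfl

lemma card_subtype_ofFn {ι : Type*} {m : ℕ} {P : List ι → Prop}
    (h : ∀ l, P l → l.length = m) :
    Nat.card {f : Fin m → ι // P (List.ofFn f)} = Nat.card {l // P l} := by
  refine Nat.card_congr <|
    Equiv.ofBijective (fun f => ⟨List.ofFn f.1, f.2⟩) ⟨fun f g hfg => ?_, ?_⟩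
  · exact Subtype.ext (List.ofFn_injective (congrArg Subtype.val hfg))
  · rintro ⟨l, hl⟩
    obtain rfl := h l hl
    exact ⟨⟨fun i => l[i], by simpa [List.ofFn_getElem]⟩, by simp [List.ofFn_getElem]⟩

noncomputable def partitionEquiv (α ι : Type*) [Fintype α] [DecidableEq ι] :
    {S : ι → Finset α // ∀ a, ∃! i, a ∈ S i} ≃ (α → ι) where
  toFun S a := (S.2 a).exists.choose
  invFun f := ⟨fun i => univ.filter (f · = i),
    fun a => ⟨f a, by simp, fun i hi => by simpa [eq_comm] using hi⟩⟩
  left_inv S := Subtype.ext <| funext fun i => Finset.ext fun a => by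
    simpa using ⟨fun h => h ▸ (S.2 a).exists.choose_spec,
      fun h => (S.2 a).unique (S.2 a).exists.choose_spec h⟩
  right_inv f := funext fun a => by simp

section Pick

variable {ι α : Type*} [DecidableEq ι]

def pick (j : ι) (κ : List ι) (x : List α) : List α :=
  ((κ.zip x).filter fun p => p.1 = j).map Prod.snd

@[simp] lemma pick_nil_left (j : ι) (x : List α) : pick j [] x = [] := rfl

@[simp] lemma pick_nil_right (j : ι) (κ : List ι) : pick j κ ([] : List α) = [] := by
  simp [pick]

@[simp] lemma pick_cons_cons (j c : ι) (κ : List ι) (a : α) (x : List α) :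
    pick j (c :: κ) (a :: x) = if c = j then a :: pick j κ x else pick j κ x := by
  by_cases h : c = j <;> simp [pick, h]

lemma length_pick (j : ι) {κ : List ι} {x : List α} (h : κ.length = x.length) :
    (pick j κ x).length = κ.count j := by
  induction κ generalizing x with
  | nil => simp
  | cons c κ ih =>
    obtain _ | ⟨a, x⟩ := x
    · simp at h
    · by_cases hc : c = j <;> simp_all

lemma pick_of_subsingleton [Subsingleton ι] (j : ι) {κ : List ι} {x : List α}
    (h : κ.length = x.length) : pick j κ x = x := by
  induction κ generalizing x with
  | nil => simpa [eq_comm] using h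
  | cons c κ ih =>
    obtain _ | ⟨a, x⟩ := x
    · simp at h
    · simp_all [Subsingleton.elim c j]

lemma pick_ofFn {m : ℕ} (j : ι) (f : Fin m → ι) (g : Fin m → α) :
    pick j (List.ofFn f) (List.ofFn g) = ((List.finRange m).filter fun i => f i = j).map g := by
  simp [pick, List.ofFn_eq_map, List.zip_map', List.filter_map, Function.comp_def]

end Pick

section SplitColors

variable {n : ℕ} {α : Type*}

def colorMask (κ : List (Fin (n + 1))) : List Bool := κ.map (· ≠ 0)

def lowerColors (κ : List (Fin (n + 1))) : List (Fin n) := κ.filterMap (finSuccEquiv n)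

-- Inverse to `κ ↦ (colorMask κ, lowerColors κ)` if `σ.count true = l.length`, junk otherwise.
def raiseColors : List Bool → List (Fin n) → List (Fin (n + 1))
  | [], _ => []
  | false :: σ, l => 0 :: raiseColors σ l
  | true :: _, [] => []
  | true :: σ, c :: l => c.succ :: raiseColors σ l

@[simp] lemma colorMask_cons_zero (κ : List (Fin (n + 1))) :
    colorMask (0 :: κ) = false :: colorMask κ := by simp [colorMask]
@[simp] lemma colorMask_cons_succ (c : Fin n) (κ : List (Fin (n + 1))) :
    colorMask (c.succ :: κ) = true :: colorMask κ := by simp [colorMask, Fin.succ_ne_zero]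
@[simp] lemma lowerColors_nil : lowerColors ([] : List (Fin (n + 1))) = [] := rfl
@[simp] lemma lowerColors_cons_zero (κ : List (Fin (n + 1))) :
    lowerColors (0 :: κ) = lowerColors κ := by
  rw [lowerColors, List.filterMap_cons, finSuccEquiv_zero]; rfl
@[simp] lemma lowerColors_cons_succ (c : Fin n) (κ : List (Fin (n + 1))) :
    lowerColors (c.succ :: κ) = c :: lowerColors κ := by simp [lowerColors]

@[simp] lemma length_colorMask (κ : List (Fin (n + 1))) : (colorMask κ).length = κ.length := by
  simp [colorMask]

lemma length_lowerColors (κ : List (Fin (n + 1))) :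
    (lowerColors κ).length = (colorMask κ).count true := by
  induction κ with
  | nil => rfl
  | cons c κ ih => cases c using Fin.cases <;> simp [ih]

lemma pick_zero_eq_pick_colorMask (κ : List (Fin (n + 1))) (x : List α) :
    pick 0 κ x = pick false (colorMask κ) x := by
  induction κ generalizing x with
  | nil => rfl
  | cons c κ ih =>
    obtain _ | ⟨a, x⟩ := x
    · simp
    · cases c using Fin.cases <;> simp [ih, Fin.succ_ne_zero]

lemma pick_succ_eq_pick_lowerColors (j : Fin n) (κ : List (Fin (n + 1))) (x : List α) :
    pick j.succ κ x = pick j (lowerColors κ) (pick true (colorMask κ) x) := by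
  induction κ generalizing x with
  | nil => rfl
  | cons c κ ih =>
    obtain _ | ⟨a, x⟩ := x
    · simp
    · cases c using Fin.cases <;> simp [ih, Fin.succ_ne_zero, eq_comm]

lemma idxOf_succ_lt_idxOf_succ_iff (j k : Fin n) (κ : List (Fin (n + 1))) :
    κ.idxOf j.succ < κ.idxOf k.succ ↔ (lowerColors κ).idxOf j < (lowerColors κ).idxOf k := by
  induction κ with
  | nil => simp
  | cons c κ ih =>
    cases c using Fin.cases with
    | zero => simp [List.idxOf_cons_ne _ (Fin.succ_ne_zero _).symm, ih]
    | succ c =>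
      by_cases hjk : j = k
      · simp [hjk]
      by_cases hj : c = j <;> by_cases hk : c = k
      all_goals simp_all

lemma colorMask_raiseColors {σ : List Bool} {l : List (Fin n)} (h : σ.count true = l.length) :
    colorMask (raiseColors σ l) = σ := by
  induction σ generalizing l with
  | nil => rfl
  | cons b σ ih =>
    cases b
    · simp_all [raiseColors]
    · obtain _ | ⟨c, l⟩ := l
      · simp at h
      · simp_all [raiseColors]

lemma lowerColors_raiseColors {σ : List Bool} {l : List (Fin n)} (h : σ.count true = l.length) :
    lowerColors (raiseColors σ l) = l := by
  induction σ generalizing l with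
  | nil => simpa [raiseColors, eq_comm] using h
  | cons b σ ih =>
    cases b
    · simp_all [raiseColors]
    · obtain _ | ⟨c, l⟩ := l
      · simp at h
      · simp_all [raiseColors]

lemma raiseColors_colorMask_lowerColors (κ : List (Fin (n + 1))) :
    raiseColors (colorMask κ) (lowerColors κ) = κ := by
  induction κ with
  | nil => rfl
  | cons c κ ih => cases c using Fin.cases <;> simp [raiseColors, ih]

end SplitColors

section Merge

variable {α : Type*}

def IsMerge (u v x : List α) (σ : List Bool) : Prop :=
  σ.length = x.length ∧ pick false σ x = u ∧ pick true σ x = v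

instance (u v x : List α) : Finite {σ // IsMerge u v x σ} :=
  finite_subtype_of_length_eq x.length fun _ h => h.1

lemma isMerge_nil_iff {u v : List α} {σ : List Bool} :
    IsMerge u v [] σ ↔ σ = [] ∧ u = [] ∧ v = [] := by
  simp [IsMerge, eq_comm]

lemma isMerge_cons_false_iff {u v x : List α} {c : α} {σ : List Bool} :
    IsMerge u v (c :: x) (false :: σ) ↔ u.head? = some c ∧ IsMerge u.tail v x σ := by
  simp [IsMerge, List.cons_eq_iff_head?_eq_some, and_assoc, and_left_comm]

lemma isMerge_cons_true_iff {u v x : List α} {c : α} {σ : List Bool} :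
    IsMerge u v (c :: x) (true :: σ) ↔ v.head? = some c ∧ IsMerge u v.tail x σ := by
  simp [IsMerge, List.cons_eq_iff_head?_eq_some, and_left_comm]

lemma card_isMerge_nil (u v : List α) :
    Nat.card {σ // IsMerge u v [] σ} = if u = [] ∧ v = [] then 1 else 0 := by
  simp only [isMerge_nil_iff]
  split_ifs with h <;> simp [h]

lemma card_isMerge_cons [DecidableEq α] (u v x : List α) (c : α) :
    Nat.card {σ // IsMerge u v (c :: x) σ} =
      (if u.head? = some c then Nat.card {σ // IsMerge u.tail v x σ} else 0) +
        (if v.head? = some c then Nat.card {σ // IsMerge u v.tail x σ} else 0) := by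
  have : ∀ b, Finite {σ // IsMerge u v (c :: x) (b :: σ)} := fun b =>
    finite_subtype_of_length_eq x.length fun σ h => by simpa using h.1
  rw [Nat.card_congr (consSigmaEquiv (by simp [IsMerge])), Nat.card_sigma, Fintype.sum_bool]
  simp only [isMerge_cons_false_iff, isMerge_cons_true_iff]
  split_ifs <;> simp_all [add_comm]

lemma IsMerge.count_true_eq {u v x : List α} {σ : List Bool} (h : IsMerge u v x σ) :
    σ.count true = v.length := by
  rw [← h.2.2, length_pick _ h.1]

end Merge

section Shuffle

lemma δ_apply (y x : Word) : δ y x = if y = x then 1 else 0 :=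
  Finsupp.single_apply

@[simp] lemma prependLetter_apply_nil (a : Bool) (f : A01) : prependLetter a f [] = 0 :=
  Finsupp.mapDomain_of_notMem_range _ _ (by simp)

lemma prependLetter_apply_cons (a c : Bool) (f : A01) (x : Word) :
    prependLetter a f (c :: x) = if a = c then f x else 0 := by
  split_ifs with h
  · subst h; exact Finsupp.mapDomain_apply List.cons_injective f x
  · exact Finsupp.mapDomain_of_notMem_range _ _ (by simpa using h)

lemma shuffle_nil_right (u : Word) : shuffle u [] = δ u := by
  cases u <;> simp [shuffle]

lemma shuffle_apply_nil (u v : Word) : shuffle u v [] = if u = [] ∧ v = [] then 1 else 0 := by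
  match u, v with
  | [], v => simp [shuffle, δ_apply]
  | _ :: _, [] => simp [shuffle, δ_apply]
  | _ :: _, _ :: _ => simp [shuffle]

lemma shuffle_apply_cons (u v x : Word) (c : Bool) :
    shuffle u v (c :: x) =
      (if u.head? = some c then shuffle u.tail v x else 0) +
        (if v.head? = some c then shuffle u v.tail x else 0) := by
  match u, v with
  | [], v => cases v <;> simp [shuffle, δ_apply, ite_and]
  | a :: u, [] => simp [shuffle_nil_right, δ_apply, ite_and]
  | a :: u, b :: v => simp [shuffle, prependLetter_apply_cons]

lemma shuffle_apply (u v x : Word) : shuffle u v x = Nat.card {σ // IsMerge u v x σ} := by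
  induction x generalizing u v with
  | nil => rw [shuffle_apply_nil, card_isMerge_nil]; split_ifs <;> simp
  | cons c x ih => rw [shuffle_apply_cons, card_isMerge_cons, ih, ih]; split_ifs <;> simp

end Shuffle

section Coloring

variable {w : Word} {vs : List Word} {c : Bool} {x : Word}

/- A good shuffle recorded by the color of each position of `x`. The `idxOf` of an absent color is
the length of the list, which plays the role of `Finset.min ∅ = ⊤`. -/
def IsColoring (ws : List Word) (x : Word) (κ : List (Fin ws.length)) : Prop :=
  κ.length = x.length ∧ (∀ j, pick j κ x = ws.get j) ∧
    ∀ j k, j < k → κ.idxOf j < κ.idxOf k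

instance (ws : List Word) (x : Word) : Finite {κ // IsColoring ws x κ} :=
  finite_subtype_of_length_eq x.length fun _ h => h.1

lemma isColoring_cons_zero_iff {κ : List (Fin (vs.length + 1))} :
    IsColoring (w :: vs) (c :: x) (0 :: κ) ↔
      w.head? = some c ∧ IsMerge w.tail (pick true (colorMask κ) x) x (colorMask κ) ∧
        IsColoring vs (pick true (colorMask κ) x) (lowerColors κ) := by
  have hpick : (∀ j, pick j (0 :: κ) (c :: x) = (w :: vs).get j) ↔
      (w.head? = some c ∧ pick false (colorMask κ) x = w.tail) ∧
        ∀ j, pick j (lowerColors κ) (pick true (colorMask κ) x) = vs.get j := by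
    simp [Fin.forall_fin_succ, pick_zero_eq_pick_colorMask, pick_succ_eq_pick_lowerColors,
      (Fin.succ_ne_zero _).symm, List.cons_eq_iff_head?_eq_some]
  have hord : (∀ j k : Fin (vs.length + 1), j < k → (0 :: κ).idxOf j < (0 :: κ).idxOf k) ↔
      ∀ j k : Fin vs.length, j < k → (lowerColors κ).idxOf j < (lowerColors κ).idxOf k := by
    simp [Fin.forall_fin_succ, List.idxOf_cons_ne, (Fin.succ_ne_zero _).symm,
      idxOf_succ_lt_idxOf_succ_iff]
  unfold IsColoring
  erw [hpick, hord]
  simp only [IsMerge, List.length_cons, Nat.add_right_cancel_iff, length_colorMask]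
  constructor
  · rintro ⟨hlen, ⟨⟨hhead, htail⟩, hpick⟩, hord⟩
    refine ⟨hhead, ⟨hlen, htail, trivial⟩, ?_, hpick, hord⟩
    rw [length_lowerColors, length_pick _ (by simpa using hlen)]
  · rintro ⟨hhead, ⟨hlen, htail, -⟩, -, hpick, hord⟩
    exact ⟨hlen, ⟨⟨hhead, htail⟩, hpick⟩, hord⟩

lemma IsColoring.eq_zero_cons {κ : List (Fin (vs.length + 1))}
    (h : IsColoring (w :: vs) (c :: x) κ) : κ = 0 :: κ.tail := by
  obtain ⟨hlen, -, hord⟩ := h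
  obtain _ | ⟨j, κ⟩ := κ
  · simp at hlen
  · by_contra hj
    have := hord 0 j (Fin.pos_iff_ne_zero.mpr fun h => hj (by rw [h]; rfl))
    simp at this

lemma not_isColoring_cons_cons_nil {v : Word} {κ : List (Fin (w :: v :: vs).length)} :
    ¬ IsColoring (w :: v :: vs) [] κ := by
  rintro ⟨hlen, -, hord⟩
  rw [List.eq_nil_of_length_eq_zero hlen] at hord
  simpa using hord ⟨0, by simp⟩ ⟨1, by simp⟩ (by simp)

lemma isColoring_nil_iff {κ : List (Fin 0)} : IsColoring [] x κ ↔ κ = [] ∧ x = [] := by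
  cases κ with
  | nil => simp [IsColoring, @eq_comm _ 0, List.length_eq_zero_iff]
  | cons c _ => exact c.elim0

lemma isColoring_singleton_iff {κ : List (Fin 1)} :
    IsColoring [w] x κ ↔ κ = List.replicate x.length 0 ∧ x = w := by
  have : Subsingleton (Fin [w].length) := inferInstanceAs (Subsingleton (Fin 1))
  constructor
  · rintro ⟨hlen, hpick, -⟩
    exact ⟨List.eq_replicate_iff.mpr ⟨hlen, fun _ _ => Subsingleton.elim _ _⟩,
      (pick_of_subsingleton 0 hlen).symm.trans (hpick 0)⟩
  · rintro ⟨rfl, rfl⟩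
    refine ⟨List.length_replicate, fun j => ?_, fun j k hjk => absurd hjk ?_⟩
    · simpa [Subsingleton.elim j 0] using pick_of_subsingleton j List.length_replicate
    · simp [Subsingleton.elim j k]

lemma IsColoring.length_eq_sum {ws : List Word} {κ : List (Fin ws.length)}
    (h : IsColoring ws x κ) : x.length = (ws.map List.length).sum := by
  calc x.length = κ.length := h.1.symm
    _ = ∑ j, κ.count j := by
      simpa using (Multiset.sum_count_eq_card (s := univ) (m := (κ : Multiset (Fin ws.length)))
        (by simp)).symm
    _ = ∑ j, (pick j κ x).length := by simp [length_pick _ h.1]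
    _ = (ws.map List.length).sum := by simp [h.2.1, Fin.sum_univ_fun_getElem]

lemma IsColoring.split {κ : List (Fin (vs.length + 1))} (h : IsColoring (w :: vs) (c :: x) κ) :
    w.head? = some c ∧ IsMerge w.tail (pick true (colorMask κ.tail) x) x (colorMask κ.tail) ∧
      IsColoring vs (pick true (colorMask κ.tail) x) (lowerColors κ.tail) :=
  isColoring_cons_zero_iff.mp (h.eq_zero_cons ▸ h)

def coloringFiberEquiv (hw : w.head? = some c) (y : Word) :
    {κ : {κ // IsColoring (w :: vs) (c :: x) κ} // pick true (colorMask κ.1.tail) x = y} ≃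
      {σ // IsMerge w.tail y x σ} × {κ // IsColoring vs y κ} where
  toFun κ := (⟨colorMask κ.1.1.tail, by simpa only [κ.2] using κ.1.2.split.2.1⟩,
    ⟨lowerColors κ.1.1.tail, by simpa only [κ.2] using κ.1.2.split.2.2⟩)
  invFun p :=
    have hcount : p.1.1.count true = p.2.1.length := p.1.2.count_true_eq.trans p.2.2.1.symm
    have hy : pick true p.1.1 x = y := p.1.2.2.2
    ⟨⟨0 :: raiseColors p.1.1 p.2.1, isColoring_cons_zero_iff.mpr <| by
      rw [colorMask_raiseColors hcount, lowerColors_raiseColors hcount, hy]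
      exact ⟨hw, p.1.2, p.2.2⟩⟩, by simp [colorMask_raiseColors hcount, hy]⟩
  left_inv κ := Subtype.ext <| Subtype.ext <| by
    simp [raiseColors_colorMask_lowerColors, ← κ.1.2.eq_zero_cons]
  right_inv p :=
    have hcount : p.1.1.count true = p.2.1.length := p.1.2.count_true_eq.trans p.2.2.1.symm
    Prod.ext (Subtype.ext (colorMask_raiseColors hcount))
      (Subtype.ext (lowerColors_raiseColors hcount))

lemma card_isColoring_cons (t : Finset Word)
    (ht : ∀ y ∉ t, Nat.card {κ // IsColoring vs y κ} = 0) :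
    Nat.card {κ // IsColoring (w :: vs) (c :: x) κ} =
      if w.head? = some c then
        ∑ y ∈ t, Nat.card {σ // IsMerge w.tail y x σ} * Nat.card {κ // IsColoring vs y κ}
      else 0 := by
  split_ifs with hw
  · set F : {κ // IsColoring (w :: vs) (c :: x) κ} → Word :=
      fun κ => pick true (colorMask κ.1.tail) x
    have hF : F ⁻¹' t = Set.univ := by
      refine Set.eq_univ_of_forall fun κ => ?_
      by_contra hκ
      have : Nonempty {l // IsColoring vs (F κ) l} := ⟨⟨_, κ.2.split.2.2⟩⟩
      exact Nat.card_pos.ne' (ht _ hκ)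
    rw [← Nat.card_univ, ← hF,
      Finset.card_preimage_eq_sum_card_image_eq fun _ _ => Set.toFinite _]
    exact Finset.sum_congr rfl fun y _ => (Nat.card_congr (coloringFiberEquiv hw y)).trans
      (Nat.card_prod _ _)
  · have : IsEmpty {κ // IsColoring (w :: vs) (c :: x) κ} := ⟨fun κ => hw κ.2.split.1⟩
    exact Nat.card_of_isEmpty

end Coloring

section Klist

lemma halfWord_apply_nil (w y : Word) : halfWord w y [] = 0 := by
  cases w <;> simp [halfWord]

lemma halfWord_apply_cons (w y x : Word) (c : Bool) :
    halfWord w y (c :: x) = if w.head? = some c then shuffle w.tail y x else 0 := by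
  cases w <;> simp [halfWord, prependLetter_apply_cons]

lemma half_δ_apply (w : Word) (g : A01) (x : Word) :
    half (δ w) g x = g.sum fun y d => d * halfWord w y x := by
  simp [half, δ, Finsupp.sum_single_index, Finsupp.sum_apply]

lemma Klist_map_δ_apply : ∀ (ws : List Word) (x : Word),
    Klist (ws.map δ) x = Nat.card {κ // IsColoring ws x κ}
  | [], x => by
    simp only [isColoring_nil_iff]
    by_cases h : x = [] <;> simp [Klist, δ_apply, h, eq_comm]
  | [w], x => by
    simp only [isColoring_singleton_iff]
    by_cases h : w = x <;> simp [Klist, δ_apply, h, eq_comm]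
  | w :: v :: vs, x => by
    have ih := Klist_map_δ_apply (v :: vs)
    rw [List.map_cons, List.map_cons, Klist.eq_3, ← List.map_cons, half_δ_apply]
    cases x with
    | nil =>
      have : IsEmpty {κ // IsColoring (w :: v :: vs) [] κ} :=
        ⟨fun κ => not_isColoring_cons_cons_nil κ.2⟩
      simp [halfWord_apply_nil]
    | cons c x =>
      rw [card_isColoring_cons (Klist ((v :: vs).map δ)).support fun y hy => by
        exact_mod_cast (ih y).symm.trans (Finsupp.notMem_support_iff.mp hy)]
      simp only [halfWord_apply_cons]
      split_ifs
      · rw [Finsupp.sum]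
        push_cast
        exact Finset.sum_congr rfl fun y _ => by rw [ih, shuffle_apply, mul_comm]
      · simp

end Klist

section GoodShuffle

lemma isColoring_ofFn_iff (ws : List Word) (x : Word) (f : Fin x.length → Fin ws.length) :
    IsColoring ws x (List.ofFn f) ↔
      (∀ j, ((univ.filter (f · = j)).sort (· ≤ ·)).map x.get = ws.get j) ∧
        ∀ j k, j < k → (univ.filter (f · = j)).min < (univ.filter (f · = k)).min := by
  have hpick : ∀ j,
      pick j (List.ofFn f) x = ((univ.filter (f · = j)).sort (· ≤ ·)).map x.get := fun j => by
    rw [Finset.sort_filter_univ, ← pick_ofFn, List.ofFn_get]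
  have hmin : ∀ j k, (List.ofFn f).idxOf j < (List.ofFn f).idxOf k ↔
      (univ.filter (f · = j)).min < (univ.filter (f · = k)).min := by
    simp [List.idxOf_lt_idxOf_iff, Finset.min_lt_min_iff, Fin.exists_iff, Fin.forall_iff]
  simp [IsColoring, hpick, hmin]

noncomputable def goodShuffleEquiv (ws : List Word) (x : Word) :
    {S // GoodShuffle ws x S} ≃
      {f : Fin x.length → Fin ws.length // IsColoring ws x (List.ofFn f)} :=
  (Equiv.subtypeSubtypeEquivSubtypeInter _ _).symm.trans
    ((partitionEquiv _ _).symm.subtypeEquiv fun f => isColoring_ofFn_iff ws x f).symm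

end GoodShuffle

theorem Klist_coeff_eq_card_goodShuffles_general (ws : List Word) (x : Word) :
    (Klist (ws.map δ)) x
        = (Nat.card {S : Fin ws.length → Finset (Fin x.length) // GoodShuffle ws x S} : ℚ) ∧
    (x.length ≠ (ws.map List.length).sum → (Klist (ws.map δ)) x = 0) := by
  have hcard : Nat.card {S // GoodShuffle ws x S} = Nat.card {κ // IsColoring ws x κ} :=
    (Nat.card_congr (goodShuffleEquiv ws x)).trans (card_subtype_ofFn fun _ h => h.1)
  refine ⟨by rw [Klist_map_δ_apply, hcard], fun hx => ?_⟩
  have : IsEmpty {κ // IsColoring ws x κ} := ⟨fun κ => hx κ.2.length_eq_sum⟩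
  simp [Klist_map_δ_apply]

/-- For nonempty words `w^1, …, w^n` over `{0,1}` (`n ≥ 1`), the coefficient of `δ_x` in
`K(δ_{w^1}, …, δ_{w^n})` equals the number of good-shuffles realizing `x` from
`(w^1, …, w^n)`; in particular it vanishes unless `|x| = Σ_j |w^j|`. -/
theorem Klist_coeff_eq_card_goodShuffles (ws : List Word) (hne : ws ≠ [])
    (hw : ∀ w ∈ ws, w ≠ []) (x : Word) :
    (Klist (ws.map δ)) x
        = (Nat.card {S : Fin ws.length → Finset (Fin x.length) // GoodShuffle ws x S} : ℚ) ∧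
    (x.length ≠ (ws.map List.length).sum → (Klist (ws.map δ)) x = 0) :=
  Klist_coeff_eq_card_goodShuffles_general ws x
end

section
/- Let w be a word over {2,3} with k letters equal to 2 and ℓ letters equal to 3. Then the component of K_{u,v}(w) supported on words over {0,1} containing exactly k + 2ℓ letters 0 (the maximal possible number of 0's) equals u^ℓ · K_{1,0}(w). In particular, if u ≠ 0 this leading term is a nonzero multiple of K_{1,0}(w). -/
/-!
Shuffles only permute letters, so the number of zeros is additive under `≺`. Hence if every
word of `f` has at most `m` zeros and every word of `g` at most `n`, the part of `f ≺ g` with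
exactly `m + n` zeros is the half-shuffle of the corresponding top parts of `f` and `g`. The top
part of `z_2` is `z_2` and that of `z_3` is `u·δ_{(1,0,0)}`, which is `u` times the generator for
`(u, v) = (1, 0)`; induction along `K(z_{w_1}, …, z_{w_n}) = z_{w_1} ≺ K(z_{w_2}, …, z_{w_n})`
then produces the factor `u^ℓ`.
-/

open Finsupp
open scoped List

lemma support_δ (x : Word) : (δ x).support = {x} :=
  support_single x one_ne_zero

lemma exists_of_mem_support_prependLetter {a : Bool} {f : A01} {z : Word}
    (h : z ∈ (prependLetter a f).support) : ∃ s ∈ f.support, a :: s = z :=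
  Finset.mem_image.mp (mapDomain_support h)

lemma perm_of_mem_support_shuffle :
    ∀ {x y z : Word}, z ∈ (shuffle x y).support → z ~ x ++ y := by
  intro x y
  induction x, y using shuffle.induct with
  | case1 y =>
    intro z hz
    rw [shuffle, support_δ, Finset.mem_singleton] at hz
    simp [hz]
  | case2 a x =>
    intro z hz
    rw [shuffle, support_δ, Finset.mem_singleton] at hz
    simp [hz]
  | case3 a x b y ih₁ ih₂ =>
    intro z hz
    rw [shuffle] at hz
    rcases Finset.mem_union.mp (support_add hz) with h | h
    · obtain ⟨s, hs, rfl⟩ := exists_of_mem_support_prependLetter h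
      exact (ih₁ hs).cons a
    · obtain ⟨t, ht, rfl⟩ := exists_of_mem_support_prependLetter h
      exact ((ih₂ ht).cons b).trans List.perm_middle.symm

lemma perm_of_mem_support_halfWord {x y z : Word} (h : z ∈ (halfWord x y).support) :
    z ~ x ++ y := by
  cases x with
  | nil => simp [halfWord] at h
  | cons a x =>
    obtain ⟨s, hs, rfl⟩ := exists_of_mem_support_prependLetter h
    exact (perm_of_mem_support_shuffle hs).cons a

lemma exists_perm_of_mem_support_half {f g : A01} {z : Word} (h : z ∈ (half f g).support) :
    ∃ x ∈ f.support, ∃ y ∈ g.support, z ~ x ++ y := by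
  obtain ⟨x, hx, h⟩ := Finset.mem_biUnion.mp (support_sum h)
  obtain ⟨y, hy, h⟩ := Finset.mem_biUnion.mp (support_sum h)
  exact ⟨x, hx, y, hy, perm_of_mem_support_halfWord (support_smul h)⟩

lemma count_of_mem_support_half {f g : A01} {z : Word} (h : z ∈ (half f g).support)
    (b : Bool) : ∃ x ∈ f.support, ∃ y ∈ g.support, z.count b = x.count b + y.count b := by
  obtain ⟨x, hx, y, hy, hz⟩ := exists_perm_of_mem_support_half h
  exact ⟨x, hx, y, hy, by rw [hz.count_eq, List.count_append]⟩

section Bilinear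

variable (f g h : A01) (a : ℚ)

lemma half_add : half f (g + h) = half f g + half f h := by
  unfold half
  rw [← sum_add]
  congr 1; funext x c
  rw [sum_add_index' (by simp) (by intro _ _ _; rw [mul_add, add_smul])]

lemma add_half : half (f + g) h = half f h + half g h := by
  unfold half
  rw [sum_add_index' (by simp [Finsupp.sum])]
  intro x c₁ c₂
  rw [← sum_add]
  congr 1; funext y d
  rw [add_mul, add_smul]

lemma half_smul : half f (a • g) = a • half f g := by
  unfold half
  rw [smul_sum]
  congr 1; funext x c
  rw [sum_smul_index' (by simp), smul_sum]
  congr 1; funext y d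
  rw [smul_smul, smul_eq_mul, mul_left_comm]

lemma smul_half : half (a • f) g = a • half f g := by
  unfold half
  rw [sum_smul_index' (by simp [Finsupp.sum]), smul_sum]
  congr 1; funext x c
  rw [smul_sum]
  congr 1; funext y d
  rw [smul_smul, smul_eq_mul, mul_assoc]

end Bilinear

def homogeneousComponent (b : Bool) (n : ℕ) (f : A01) : A01 :=
  f.filter fun z => z.count b = n

lemma homogeneousComponent_add (b : Bool) (n : ℕ) (f g : A01) :
    homogeneousComponent b n (f + g) = homogeneousComponent b n f + homogeneousComponent b n g :=
  filter_add

section HomogeneousComponent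

variable {b : Bool} {m n N : ℕ} {f g : A01}

lemma count_of_mem_support_homogeneousComponent {z : Word}
    (hz : z ∈ (homogeneousComponent b n f).support) : z.count b = n :=
  (Finset.mem_filter.mp hz).2

lemma exists_eq_homogeneousComponent_add (hf : ∀ x ∈ f.support, x.count b ≤ n) :
    ∃ f₁ : A01, (∀ x ∈ f₁.support, x.count b < n) ∧
      f = homogeneousComponent b n f + f₁ := by
  refine ⟨f.filter (¬ ·.count b = n), fun x hx => ?_, (filter_add_filter_not f _).symm⟩
  obtain ⟨hx, hne⟩ := Finset.mem_filter.mp hx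
  exact lt_of_le_of_ne (hf x hx) hne

lemma count_le_of_mem_support_half (hf : ∀ x ∈ f.support, x.count b ≤ m)
    (hg : ∀ y ∈ g.support, y.count b ≤ n) :
    ∀ z ∈ (half f g).support, z.count b ≤ m + n := by
  intro z hz
  obtain ⟨x, hx, y, hy, hcount⟩ := count_of_mem_support_half hz b
  have := hf x hx
  have := hg y hy
  omega

lemma homogeneousComponent_half_eq_self
    (h : ∀ x ∈ f.support, ∀ y ∈ g.support, x.count b + y.count b = N) :
    homogeneousComponent b N (half f g) = half f g := by
  refine (filter_eq_self_iff _ _).mpr fun z hz => ?_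
  obtain ⟨x, hx, y, hy, hcount⟩ := count_of_mem_support_half (mem_support_iff.mpr hz) b
  rw [hcount, h x hx y hy]

lemma homogeneousComponent_half_eq_zero
    (h : ∀ x ∈ f.support, ∀ y ∈ g.support, x.count b + y.count b ≠ N) :
    homogeneousComponent b N (half f g) = 0 := by
  refine (filter_eq_zero_iff _ _).mpr fun z hz => ?_
  by_contra hne
  obtain ⟨x, hx, y, hy, hcount⟩ := count_of_mem_support_half (mem_support_iff.mpr hne) b
  exact h x hx y hy (hcount ▸ hz)

theorem homogeneousComponent_half (hf : ∀ x ∈ f.support, x.count b ≤ m)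
    (hg : ∀ y ∈ g.support, y.count b ≤ n) :
    homogeneousComponent b (m + n) (half f g)
      = half (homogeneousComponent b m f) (homogeneousComponent b n g) := by
  obtain ⟨f₁, hf₁, hf_eq⟩ := exists_eq_homogeneousComponent_add hf
  obtain ⟨g₁, hg₁, hg_eq⟩ := exists_eq_homogeneousComponent_add hg
  set f₀ := homogeneousComponent b m f
  set g₀ := homogeneousComponent b n g
  have hf₀ : ∀ x ∈ f₀.support, x.count b = m :=
    fun _ => count_of_mem_support_homogeneousComponent
  have hg₀ : ∀ y ∈ g₀.support, y.count b = n :=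
    fun _ => count_of_mem_support_homogeneousComponent
  calc homogeneousComponent b (m + n) (half f g)
      = homogeneousComponent b (m + n) (half (f₀ + f₁) (g₀ + g₁)) := by
        rw [← hf_eq, ← hg_eq]
    _ = half f₀ g₀ := by
      rw [add_half, half_add, half_add, homogeneousComponent_add, homogeneousComponent_add,
        homogeneousComponent_add,
        homogeneousComponent_half_eq_self fun x hx y hy => by rw [hf₀ x hx, hg₀ y hy],
        homogeneousComponent_half_eq_zero fun x hx y hy => by
          have := hf₀ x hx; have := hg₁ y hy; omega,
        homogeneousComponent_half_eq_zero fun x hx y hy => by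
          have := hf₁ x hx; have := hg₀ y hy; omega,
        homogeneousComponent_half_eq_zero fun x hx y hy => by
          have := hf₁ x hx; have := hg₁ y hy; omega]
      simp only [add_zero]

end HomogeneousComponent

def maxZeroCount (w : List Bool) : ℕ := w.count false + 2 * w.count true

lemma maxZeroCount_cons (c : Bool) (w : List Bool) :
    maxZeroCount (c :: w) = maxZeroCount [c] + maxZeroCount w := by
  simp only [maxZeroCount, ← List.singleton_append (l := w), List.count_append]
  ring

section Generators

variable (u v : ℚ) (c : Bool)

lemma count_false_le_of_mem_support_zgen :
    ∀ z ∈ (zgen u v c).support, z.count false ≤ maxZeroCount [c] := by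
  intro z hz
  cases c with
  | false =>
    rw [zgen, support_δ, Finset.mem_singleton] at hz
    simp [hz, maxZeroCount]
  | true =>
    rw [zgen] at hz
    rcases Finset.mem_union.mp (support_add hz) with h | h <;>
    · have h := support_smul h
      rw [support_δ, Finset.mem_singleton] at h
      simp [h, maxZeroCount]

lemma homogeneousComponent_zgen :
    homogeneousComponent false (maxZeroCount [c]) (zgen u v c)
      = u ^ [c].count true • zgen 1 0 c := by
  cases c <;> simp [homogeneousComponent, zgen, δ, maxZeroCount]

end Generators

section Kuv

variable (u v : ℚ)

lemma count_false_le_of_mem_support_Kuv :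
    ∀ w, ∀ z ∈ (Kuv u v w).support, z.count false ≤ maxZeroCount w
  | [] => by simp [Kuv, Klist, support_δ, maxZeroCount]
  | [c] => count_false_le_of_mem_support_zgen u v c
  | c :: d :: w => by
    rw [maxZeroCount_cons]
    exact count_le_of_mem_support_half (count_false_le_of_mem_support_zgen u v c)
      (count_false_le_of_mem_support_Kuv (d :: w))

theorem homogeneousComponent_Kuv :
    ∀ w, homogeneousComponent false (maxZeroCount w) (Kuv u v w) = u ^ w.count true • Kuv 1 0 w
  | [] => by
    have hK (u v : ℚ) : Kuv u v [] = δ [] := rfl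
    rw [hK, hK, List.count_nil, pow_zero, one_smul]
    exact filter_single_of_pos _ rfl
  | [c] => homogeneousComponent_zgen u v c
  | c :: d :: w => by
    have hK (u v : ℚ) : Kuv u v (c :: d :: w) = half (zgen u v c) (Kuv u v (d :: w)) := rfl
    rw [maxZeroCount_cons, hK,
      homogeneousComponent_half (count_false_le_of_mem_support_zgen u v c)
        (count_false_le_of_mem_support_Kuv u v (d :: w)),
      homogeneousComponent_zgen, homogeneousComponent_Kuv (d :: w), smul_half, half_smul,
      smul_smul, ← pow_add, ← List.count_append, List.singleton_append, hK]

end Kuv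

/-- For a word `w` over `{2,3}` (with `k` letters `2` and `ℓ` letters `3`, encoded by
`false`/`true`), the component of `K_{u,v}(w)` supported on words with exactly `k + 2ℓ`
letters `0` equals `u^ℓ · K_{1,0}(w)`; if `u ≠ 0` this is a nonzero multiple of `K_{1,0}(w)`. -/
theorem Kuv_leading_term_zeros (u v : ℚ) (w : List Bool) :
    Finsupp.filter
        (fun x : Word => x.count false = w.count false + 2 * w.count true)
        (Kuv u v w)
      = u ^ (w.count true) • Kuv 1 0 w ∧
    (u ≠ 0 → u ^ (w.count true) ≠ 0) :=
  ⟨homogeneousComponent_Kuv u v w, fun hu => pow_ne_zero _ hu⟩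
end

section
/- Let w and w' be words over {2,3} of the same length n, with the same number of 2's and the same number of 3's, that agree in their first i letters. Then any good-shuffle (S_1, …, S_n) realizing cat₀(w') from the blocks (cat₀(w_1), …, cat₀(w_n)) is the identity on the common prefix: for every j ≤ i, S_j equals the set of consecutive positions occupied by the j-th block of cat₀(w'), namely the positions from |cat₀(w_1 ⋯ w_{j-1})| + 1 through |cat₀(w_1 ⋯ w_j)|. -/
/-! Every block of `cat₀` is a `1` followed by `0`s, and every word of the shuffle starts with
`1`. Hence, once the parts before `j` are known to fill exactly the positions before the `j`-th
block, each position `q` of that block lies in a part whose minimum is a `1` in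
`[start of block, q]`, i.e. the start of the block itself; since the minima of the parts are
distinct, that part is the `j`-th one, and counting letters shows that it has no other positions.
Induction along the common prefix finishes the proof. -/

theorem List.getElem_eq_getElem_of_take_eq {α : Type*} {l l' : List α} {i j : ℕ}
    (h : l.take i = l'.take i) (hji : j < i) (hj : j < l.length) :
    ∃ hj' : j < l'.length, l[j] = l'[j] := by
  have hj' : j < l'.length := by
    have := congrArg List.length h
    simp only [List.length_take] at this
    omega
  refine ⟨hj', ?_⟩
  simpa [List.getElem?_take, hji, hj, hj'] using congrArg (·[j]?) h

def SplitsAt {n N : ℕ} (S : Fin n → Finset (Fin N)) (j a : ℕ) : Prop :=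
  ∀ k p, p ∈ S k → ((k : ℕ) < j ↔ (p : ℕ) < a)

theorem splitsAt_zero {n N : ℕ} (S : Fin n → Finset (Fin N)) : SplitsAt S 0 0 := by
  simp [SplitsAt]

theorem SplitsAt.succ {n N : ℕ} {S : Fin n → Finset (Fin N)} {j : Fin n} {a m : ℕ}
    (hdisj : ∀ p k l, p ∈ S k → p ∈ S l → k = l) (hsplit : SplitsAt S j a)
    (hj : S j = Finset.univ.filter (fun p : Fin N => a ≤ (p : ℕ) ∧ (p : ℕ) < a + m)) :
    SplitsAt S (j + 1) (a + m) := by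
  intro k p hp
  rcases lt_trichotomy k j with hkj | rfl | hjk
  · have := (hsplit k p hp).1 hkj
    omega
  · rw [hj] at hp
    simp only [Finset.mem_filter, Finset.mem_univ, true_and] at hp
    omega
  · have hap : a ≤ p := not_lt.1 fun h => (Fin.lt_asymm hjk) ((hsplit k p hp).2 h)
    have hpj : ¬ p ∈ S j := fun h => hjk.ne (hdisj p j k h hp)
    rw [hj] at hpj
    simp only [Finset.mem_filter, Finset.mem_univ, true_and, not_and, not_lt] at hpj
    have := hpj hap
    omega

namespace GoodShuffle

variable {ws : List Word} {x : Word} {S : Fin ws.length → Finset (Fin x.length)}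

theorem eq_of_mem (hS : GoodShuffle ws x S) {p : Fin x.length} {k l : Fin ws.length}
    (hk : p ∈ S k) (hl : p ∈ S l) : k = l :=
  (hS.1 p).unique hk hl

theorem card_eq (hS : GoodShuffle ws x S) (k : Fin ws.length) :
    (S k).card = (ws.get k).length := by
  simpa using congrArg List.length (hS.2.1 k)

theorem min'_lt_min' (hS : GoodShuffle ws x S) {k l : Fin ws.length} (hkl : k < l)
    (hk : (S k).Nonempty) (hl : (S l).Nonempty) : (S k).min' hk < (S l).min' hl := by
  have := hS.2.2 k l hkl
  rwa [← Finset.coe_min' hk, ← Finset.coe_min' hl, WithTop.coe_lt_coe] at this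

theorem get_min'_eq (hS : GoodShuffle ws x S) {k : Fin ws.length} {b : Bool} {t : Word}
    (hk : ws.get k = b :: t) (hne : (S k).Nonempty) : x.get ((S k).min' hne) = b := by
  have h0 : 0 < ((S k).sort (· ≤ ·)).length := by
    rw [Finset.length_sort]; exact hne.card_pos
  have := congrArg (·[0]?) (hS.2.1 k)
  simp only [hk, List.getElem?_map, List.getElem?_eq_getElem h0, Option.map_some,
    List.getElem?_cons_zero, Option.some.injEq] at this
  rwa [Finset.sorted_zero_eq_min'] at this

theorem eq_filter_of_splitsAt (hS : GoodShuffle ws x S)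
    (hhead : ∀ k, ∃ t, ws.get k = true :: t) {j : Fin ws.length} {a m : ℕ}
    (hsplit : SplitsAt S j a) (hm : (ws.get j).length = m) (hN : a + m ≤ x.length)
    (hx : ∀ q : Fin x.length, a < q → (q : ℕ) < a + m → x.get q = false) :
    S j = Finset.univ.filter (fun p : Fin x.length => a ≤ (p : ℕ) ∧ (p : ℕ) < a + m) := by
  have hne : ∀ k, (S k).Nonempty := fun k => by
    obtain ⟨t, ht⟩ := hhead k
    rw [← Finset.card_pos, hS.card_eq, ht]
    exact Nat.succ_pos _
  have hge : ∀ k : Fin ws.length, j ≤ k → a ≤ ((S k).min' (hne k) : ℕ) := fun k hjk =>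
    not_lt.1 fun h => not_lt.2 hjk ((hsplit k _ (Finset.min'_mem _ _)).2 h)
  have hsub : Finset.univ.filter (fun p : Fin x.length => a ≤ (p : ℕ) ∧ (p : ℕ) < a + m) ⊆ S j := by
    intro q hq
    simp only [Finset.mem_filter, Finset.mem_univ, true_and] at hq
    obtain ⟨k, hk, -⟩ := hS.1 q
    have hjk : j ≤ k := not_lt.1 fun h => not_lt.2 hq.1 ((hsplit k q hk).1 h)
    have hmin_le : (S k).min' (hne k) ≤ q := Finset.min'_le _ _ hk
    -- the minimum of part `k` reads `1`, so it cannot lie strictly inside the block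
    have hmin : ((S k).min' (hne k) : ℕ) = a := by
      obtain ⟨t, ht⟩ := hhead k
      have htrue := hS.get_min'_eq ht (hne k)
      by_contra hne_a
      have hfalse := hx _ (lt_of_le_of_ne (hge k hjk) (Ne.symm hne_a)) (by
        have : ((S k).min' (hne k) : ℕ) ≤ q := hmin_le
        omega)
      exact Bool.false_ne_true (hfalse.symm.trans htrue)
    obtain rfl : j = k := by
      refine le_antisymm hjk (not_lt.1 fun hlt => ?_)
      have hlt' : ((S j).min' (hne j) : ℕ) < (S k).min' (hne k) :=
        hS.min'_lt_min' hlt (hne j) (hne k)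
      have := hge j le_rfl
      omega
    exact hk
  refine (Finset.eq_of_subset_of_card_le hsub ?_).symm
  rw [hS.card_eq, hm, ← Finset.card_map Fin.valEmbedding]
  calc m = (Finset.Ico a (a + m)).card := by simp
    _ ≤ _ := Finset.card_le_card fun r hr => by
      simp only [Finset.mem_Ico] at hr
      simp only [Finset.mem_map, Finset.mem_filter, Finset.mem_univ, true_and,
        Fin.valEmbedding_apply]
      exact ⟨⟨r, by omega⟩, hr, rfl⟩

end GoodShuffle

theorem blocks0_eq_cons (c : Bool) : ∃ t, blocks0 c = true :: t := by
  cases c <;> exact ⟨_, rfl⟩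

theorem blocks0_getElem_of_pos (c : Bool) {m : ℕ} (h0 : 0 < m) (hm : m < (blocks0 c).length) :
    (blocks0 c)[m] = false := by
  cases c <;> simp [blocks0] at hm ⊢ <;> interval_cases m <;> rfl

theorem cat0_append (u v : List Bool) : cat0 (u ++ v) = cat0 u ++ cat0 v := by
  simp [cat0]

theorem cat0_take_succ {w : List Bool} {j : ℕ} (hj : j < w.length) :
    cat0 (w.take (j + 1)) = cat0 (w.take j) ++ blocks0 w[j] := by
  rw [List.take_add_one, cat0_append, List.getElem?_eq_getElem hj]
  simp [cat0]

theorem length_cat0_take_le (w : List Bool) (j : ℕ) :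
    (cat0 (w.take j)).length ≤ (cat0 w).length := by
  conv_rhs => rw [← List.take_append_drop j w, cat0_append, List.length_append]
  omega

theorem getElem_cat0_eq_false {w : List Bool} {j q : ℕ} (hj : j < w.length)
    (h1 : (cat0 (w.take j)).length < q) (h2 : q < (cat0 (w.take (j + 1))).length)
    (hq : q < (cat0 w).length) : (cat0 w)[q] = false := by
  have hsplit : cat0 w = cat0 (w.take j) ++ blocks0 w[j] ++ cat0 (w.drop (j + 1)) := by
    rw [← cat0_take_succ hj, ← cat0_append, List.take_append_drop]
  rw [cat0_take_succ hj, List.length_append] at h2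
  simp only [hsplit]
  rw [List.getElem_append_left (by simp; omega), List.getElem_append_right (by omega)]
  exact blocks0_getElem_of_pos _ (by omega) _

namespace GoodShuffle

variable {w w' : List Bool} {S : Fin (w.map blocks0).length → Finset (Fin (cat0 w').length)}

theorem eq_block_cat0 (hS : GoodShuffle (w.map blocks0) (cat0 w') S)
    {j : Fin (w.map blocks0).length} (hj' : (j : ℕ) < w'.length)
    (hc : w[(j : ℕ)]'(by simpa using j.isLt) = w'[(j : ℕ)])
    (hsplit : SplitsAt S j (cat0 (w'.take j)).length) :
    S j = Finset.univ.filter (fun p : Fin (cat0 w').length =>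
        (cat0 (w'.take (j : ℕ))).length ≤ (p : ℕ) ∧
        (p : ℕ) < (cat0 (w'.take ((j : ℕ) + 1))).length) := by
  have hlen := congrArg List.length (cat0_take_succ hj')
  rw [List.length_append] at hlen
  rw [hlen]
  refine hS.eq_filter_of_splitsAt (fun k => by simpa using blocks0_eq_cons _) hsplit
    (by simp [hc]) (hlen ▸ length_cat0_take_le _ _) fun q h1 h2 => ?_
  exact getElem_cat0_eq_false hj' h1 (hlen ▸ h2) q.isLt

theorem splitsAt_cat0 (hS : GoodShuffle (w.map blocks0) (cat0 w') S) {i : ℕ}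
    (hpre : w.take i = w'.take i) :
    ∀ j ≤ i, j ≤ w.length → SplitsAt S j (cat0 (w'.take j)).length
  | 0, _, _ => splitsAt_zero S
  | j + 1, hji, hjw => by
    obtain ⟨hj', hc⟩ := List.getElem_eq_getElem_of_take_eq hpre hji hjw
    have hsplit := splitsAt_cat0 hS hpre j (by omega) (by omega)
    have hjS : j < (w.map blocks0).length := by simpa using hjw
    have hblock := hS.eq_block_cat0 (j := ⟨j, hjS⟩) hj' hc hsplit
    have hlen := congrArg List.length (cat0_take_succ hj')
    rw [List.length_append] at hlen
    rw [Fin.val_mk, hlen] at hblock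
    rw [hlen]
    exact SplitsAt.succ (fun _ _ _ => hS.eq_of_mem) hsplit hblock

end GoodShuffle

theorem goodShuffle_identity_on_prefix_cat0_general (w w' : List Bool)
    (i : ℕ) (hpre : w.take i = w'.take i)
    (S : Fin (w.map blocks0).length → Finset (Fin (cat0 w').length))
    (hS : GoodShuffle (w.map blocks0) (cat0 w') S)
    (j : Fin (w.map blocks0).length) (hj : (j : ℕ) < i) :
    S j = Finset.univ.filter (fun p : Fin (cat0 w').length =>
        (cat0 (w'.take (j : ℕ))).length ≤ (p : ℕ) ∧
        (p : ℕ) < (cat0 (w'.take ((j : ℕ) + 1))).length) := by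
  have hjw : (j : ℕ) < w.length := by simpa using j.isLt
  obtain ⟨hj', hc⟩ := List.getElem_eq_getElem_of_take_eq hpre hj hjw
  exact hS.eq_block_cat0 hj' hc (hS.splitsAt_cat0 hpre j hj.le hjw.le)

/-- Any good-shuffle realizing `cat₀(w')` from the blocks of `cat₀(w)` is the identity on a
common prefix of `w` and `w'` (words over `{2,3}` of the same length with the same numbers
of `2`'s and `3`'s): for `j` in the prefix, `S j` is the interval of positions of the
`j`-th block of `cat₀(w')`. -/
theorem goodShuffle_identity_on_prefix_cat0 (w w' : List Bool)
    (hlen : w.length = w'.length)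
    (h2 : w.count false = w'.count false) (h3 : w.count true = w'.count true)
    (i : ℕ) (hpre : w.take i = w'.take i)
    (S : Fin (w.map blocks0).length → Finset (Fin (cat0 w').length))
    (hS : GoodShuffle (w.map blocks0) (cat0 w') S)
    (j : Fin (w.map blocks0).length) (hj : (j : ℕ) < i) :
    S j = Finset.univ.filter (fun p : Fin (cat0 w').length =>
        (cat0 (w'.take (j : ℕ))).length ≤ (p : ℕ) ∧
        (p : ℕ) < (cat0 (w'.take ((j : ℕ) + 1))).length) :=
  goodShuffle_identity_on_prefix_cat0_general w w' i hpre S hS j hj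
end
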